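/- arXiv:1702.04890 — 3 statements merged into one kernel-verified Lean document; each statement's English description precedes it below -/
import Mathlib

section
/- Let P ⊆ X ⊆ ℝⁿ be a λ-contractive C-set for the system x⁺ = Ax + Bu with constraint sets X, U, i.e., for every x ∈ P there exists u ∈ U with Ax + Bu ∈ λP. If P = conv{v₁,...,v_N} is a polytope with vertices vₙ and associated controls uₙ ∈ U satisfying Avₙ + Buₙ ∈ λP, and γ > 1 is such that γuₙ ∈ U and γvₙ ∈ X for all n, then the scaled set γP = {γx : x ∈ P} is also λ-contractive: for every x ∈ γP ⊆ X there exists u ∈ U with Ax + Bu ∈ λ(γP). -/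
open Matrix Pointwise

/-- Scaling of a λ-contractive polytopic C-set (Lemma 2 / scaling property). -/
theorem scaled_contractive_set
    {n m N : ℕ}
    (A : Matrix (Fin n) (Fin n) ℝ) (B : Matrix (Fin n) (Fin m) ℝ)
    (X : Set (Fin n → ℝ)) (U : Set (Fin m → ℝ))
    (hXconv : Convex ℝ X) (hUconv : Convex ℝ U)
    (lam : ℝ) (hlam : lam ∈ Set.Icc (0 : ℝ) 1)
    (P : Set (Fin n → ℝ))
    (hPX : P ⊆ X)
    (hPcompact : IsCompact P) (hPconv : Convex ℝ P) (hP0 : (0 : Fin n → ℝ) ∈ interior P)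
    (v : Fin N → (Fin n → ℝ))
    (hPpoly : P = convexHull ℝ (Set.range v))
    (u : Fin N → (Fin m → ℝ))
    (huU : ∀ i, u i ∈ U)
    (hvert : ∀ i, A.mulVec (v i) + B.mulVec (u i) ∈ lam • P)
    (γ : ℝ) (hγ : 1 < γ)
    (hscaleU : ∀ i, γ • u i ∈ U)
    (hscaleX : ∀ i, γ • v i ∈ X) :
    γ • P ⊆ X ∧
      ∀ x ∈ γ • P, ∃ w ∈ U, A.mulVec x + B.mulVec w ∈ lam • (γ • P) := by
  constructor
  · -- γ • P ⊆ X
    rintro _ ⟨y, hy, rfl⟩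
    rw [hPpoly, convexHull_range_eq_exists_affineCombination] at hy
    obtain ⟨s, w, hw0, hw1, rfl⟩ := hy
    rw [Finset.affineCombination_eq_linear_combination s v w hw1]
    show γ • (∑ i ∈ s, w i • v i) ∈ X
    rw [Finset.smul_sum]
    have : ∀ i ∈ s, γ • w i • v i = w i • (γ • v i) := fun i _ => smul_comm _ _ _
    rw [Finset.sum_congr rfl this]
    exact hXconv.sum_mem hw0 hw1 (fun i _ => hscaleX i)
  · rintro _ ⟨y, hy, rfl⟩
    rw [hPpoly, convexHull_range_eq_exists_affineCombination] at hy
    obtain ⟨s, w, hw0, hw1, rfl⟩ := hy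
    rw [Finset.affineCombination_eq_linear_combination s v w hw1]
    refine ⟨∑ i ∈ s, w i • (γ • u i), ?_, ?_⟩
    · exact hUconv.sum_mem hw0 hw1 (fun i _ => hscaleU i)
    · show A *ᵥ (γ • ∑ i ∈ s, w i • v i) + B *ᵥ (∑ i ∈ s, w i • (γ • u i))
        ∈ lam • (γ • P)
      have key : A *ᵥ (γ • ∑ i ∈ s, w i • v i) + B *ᵥ (∑ i ∈ s, w i • (γ • u i))
          = ∑ i ∈ s, w i • γ • (A *ᵥ v i + B *ᵥ u i) := by
        simp only [← Matrix.mulVecLin_apply, _root_.map_smul, map_sum, smul_add,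
          Finset.smul_sum, Finset.sum_add_distrib]
        congr 1
        exact Finset.sum_congr rfl fun i _ => smul_comm _ _ _
      rw [key]
      have hconv : Convex ℝ (lam • (γ • P)) := (hPconv.smul γ).smul lam
      refine hconv.sum_mem hw0 hw1 (fun i _ => ?_)
      obtain ⟨p, hp, hpe⟩ := hvert i
      exact ⟨γ • p, ⟨p, hp, rfl⟩, by rw [← hpe, smul_comm]⟩
end

section
/- Let P₀ = conv{v₁,...,v_N} ⊂ ℝⁿ be a polytope, j ≥ 1 an integer, and a' < a positive reals. Suppose for each n ∈ {1,...,N} there exists uₙ ∈ U (U convex) such that Aʲ(a·vₙ) + (Σᵢ₌₁ʲ Aⁱ⁻¹B)uₙ ∈ a'·P₀. Then for every x ∈ a·P₀ there exists u ∈ U such that Aʲx + (Σᵢ₌₁ʲ Aⁱ⁻¹B)u ∈ a'·P₀. -/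
open Matrix Pointwise

/-- Vertex-to-set argument (Lemma 2 of the paper): a j-step constant-input
containment checked at the vertices extends to the whole scaled polytope. -/
theorem vertex_to_set_jstep
    {n m N : ℕ}
    (A : Matrix (Fin n) (Fin n) ℝ) (B : Matrix (Fin n) (Fin m) ℝ)
    (U : Set (Fin m → ℝ)) (hUconv : Convex ℝ U)
    (v : Fin N → (Fin n → ℝ))
    (P₀ : Set (Fin n → ℝ)) (hPpoly : P₀ = convexHull ℝ (Set.range v))
    (j : ℕ) (hj : 1 ≤ j)
    (a a' : ℝ) (ha' : 0 < a') (haa' : a' < a)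
    (hvert : ∀ i : Fin N, ∃ u ∈ U,
      (A ^ j).mulVec (a • v i) + ((∑ i ∈ Finset.range j, A ^ i) * B).mulVec u ∈ a' • P₀) :
    ∀ x ∈ a • P₀, ∃ u ∈ U,
      (A ^ j).mulVec x + ((∑ i ∈ Finset.range j, A ^ i) * B).mulVec u ∈ a' • P₀ := by
  intro x hx
  obtain ⟨y, hy, rfl⟩ := Set.mem_smul_set.mp hx
  have hP' : Convex ℝ (a' • P₀) := by
    rw [hPpoly]; exact (convex_convexHull ℝ _).smul a'
  set M := ((∑ i ∈ Finset.range j, A ^ i) * B) with hM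
  set S : Set (Fin n → ℝ) :=
    {y | ∃ u ∈ U, (A ^ j).mulVec (a • y) + M.mulVec u ∈ a' • P₀} with hS
  have hconv : Convex ℝ S := by
    rintro y₁ ⟨u₁, hu₁, h₁⟩ y₂ ⟨u₂, hu₂, h₂⟩ s t hs ht hst
    refine ⟨s • u₁ + t • u₂, hUconv hu₁ hu₂ hs ht hst, ?_⟩
    have h := hP' h₁ h₂ hs ht hst
    convert h using 1
    simp only [smul_add, Matrix.mulVec_add, Matrix.mulVec_smul, smul_comm a s, smul_comm a t]
    module
  have hsub : Set.range v ⊆ S := by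
    rintro _ ⟨i, rfl⟩
    exact hvert i
  have hyS : y ∈ S := by
    rw [hPpoly] at hy
    exact convexHull_min hsub hconv hy
  exact hyS
end

section
/- Let P₀ = conv{v₁,...,v_N} ⊂ ℝⁿ, j ∈ ℕ₊, ε ∈ [0,1), and suppose for each n ∈ {1,...,N} there exists uₙ ∈ U (U convex) with Aʲvₙ + (Σᵢ₌₁ʲ Aⁱ⁻¹B)uₙ ∈ ε·P₀. Then there exists a map g : P₀ → U such that for all x ∈ P₀, Aʲx + (Σᵢ₌₁ʲ Aⁱ⁻¹B)g(x) ∈ ε·P₀; consequently, the gauge satisfies Ψ_{P₀}(Aʲx + (Σᵢ₌₁ʲ Aⁱ⁻¹B)g(x)) ≤ ε for all x ∈ P₀. -/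
open Matrix Pointwise

/-- Feasibility certificate for the j-step constant stabilizing controller
inside the target set: checking at vertices suffices by convexity. -/
theorem jstep_controller_from_vertices
    {n m N : ℕ}
    (A : Matrix (Fin n) (Fin n) ℝ) (B : Matrix (Fin n) (Fin m) ℝ)
    (U : Set (Fin m → ℝ)) (hUconv : Convex ℝ U)
    (v : Fin N → (Fin n → ℝ))
    (P₀ : Set (Fin n → ℝ)) (hPpoly : P₀ = convexHull ℝ (Set.range v))
    (hPcompact : IsCompact P₀) (hP0 : (0 : Fin n → ℝ) ∈ interior P₀)
    (j : ℕ) (hj : 1 ≤ j)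
    (ε : ℝ) (hε : ε ∈ Set.Ico (0 : ℝ) 1)
    (hvert : ∀ i : Fin N, ∃ u ∈ U,
      (A ^ j).mulVec (v i) + ((∑ i ∈ Finset.range j, A ^ i) * B).mulVec u ∈ ε • P₀) :
    ∃ g : (Fin n → ℝ) → (Fin m → ℝ),
      ∀ x ∈ P₀, g x ∈ U ∧
        (A ^ j).mulVec x + ((∑ i ∈ Finset.range j, A ^ i) * B).mulVec (g x) ∈ ε • P₀ ∧
        gauge P₀ ((A ^ j).mulVec x + ((∑ i ∈ Finset.range j, A ^ i) * B).mulVec (g x)) ≤ ε := by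
  set M := (∑ i ∈ Finset.range j, A ^ i) * B with hM
  have hPconv : Convex ℝ P₀ := hPpoly ▸ convex_convexHull ℝ _
  have hεP : Convex ℝ (ε • P₀) := hPconv.smul ε
  -- The set of states for which a feasible input exists is convex
  set T : Set (Fin n → ℝ) := {x | ∃ u ∈ U,
      (A ^ j).mulVec x + M.mulVec u ∈ ε • P₀} with hT
  have hTconv : Convex ℝ T := by
    rintro x ⟨ux, hux, hx⟩ y ⟨uy, huy, hy⟩ a b ha hb hab
    refine ⟨a • ux + b • uy, hUconv hux huy ha hb hab, ?_⟩
    have : (A ^ j).mulVec (a • x + b • y) + M.mulVec (a • ux + b • uy)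
        = a • ((A ^ j).mulVec x + M.mulVec ux) + b • ((A ^ j).mulVec y + M.mulVec uy) := by
      simp [Matrix.mulVec_add, Matrix.mulVec_smul]
      module
    rw [this]
    exact hεP hx hy ha hb hab
  have hPT : P₀ ⊆ T := by
    rw [hPpoly]
    refine convexHull_min ?_ hTconv
    rintro _ ⟨i, rfl⟩
    exact hvert i
  have hall : ∀ x ∈ P₀, ∃ u ∈ U, (A ^ j).mulVec x + M.mulVec u ∈ ε • P₀ := fun x hx => hPT hx
  classical
  choose! g hgU hgmem using hall
  refine ⟨g, fun x hx => ⟨hgU x hx, hgmem x hx, ?_⟩⟩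
  exact gauge_le_of_mem hε.1 (hgmem x hx)
end
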